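/- arXiv:2502.01590 — 3 statements merged into one kernel-verified Lean document; each statement's English description precedes it below -/
import Mathlib

section
/- Define the modified SINR as SINR̄_k(W) = |g_kᵀ w_k|² / (∑_{j≠k} |g_kᵀ w_j|² + (σ²/P)∑_j ‖w_j‖²). If W̄ is any nonzero matrix achieving the maximum of ∑_k λ_k log(1 + SINR̄_k(W)) over all W ∈ ℂ^{M×K}, then the scaled matrix W̆ = √(P / tr(W̄ᴴ W̄)) · W̄ satisfies tr(W̆ᴴ W̆) = P and achieves the maximum of ∑_k λ_k log(1 + SINR_k(W)) over all W with tr(Wᴴ W) ≤ P, where SINR_k is the standard SINR with noise σ². -/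
/-!
Scaling a precoder by a nonzero real leaves every modified SINR unchanged, and on the sphere
`tr(WᴴW) = P` the modified SINR coincides with the standard one. Inside the ball
`tr(WᴴW) ≤ P` the modified noise term `(σ²/P) tr(WᴴW)` is at most `σ²`, so the modified SINR
dominates the standard one. Hence for feasible `W` the standard sum rate of `W` is at most the
modified sum rate of `W`, which is at most that of `W̄`, which equals the modified, and thus the
standard, sum rate of the rescaled `W̆` lying on the sphere.
-/

open Finset Matrix

noncomputable def dotc {M : ℕ} (g w : Fin M → ℂ) : ℂ := ∑ m, g m * w m

/-- Standard SINR with noise `σ2`. -/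
noncomputable def SINR {M K : ℕ} (g : Fin K → Fin M → ℂ) (σ2 : ℝ)
    (W : Matrix (Fin M) (Fin K) ℂ) (k : Fin K) : ℝ :=
  ‖dotc (g k) (fun m => W m k)‖ ^ 2 /
    (∑ j ∈ univ.filter (· ≠ k), ‖dotc (g k) (fun m => W m j)‖ ^ 2 + σ2)

/-- Modified SINR with noise term `(σ2/P) ∑_j ‖w_j‖²`. -/
noncomputable def SINRbar {M K : ℕ} (g : Fin K → Fin M → ℂ) (σ2 P : ℝ)
    (W : Matrix (Fin M) (Fin K) ℂ) (k : Fin K) : ℝ :=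
  ‖dotc (g k) (fun m => W m k)‖ ^ 2 /
    (∑ j ∈ univ.filter (· ≠ k), ‖dotc (g k) (fun m => W m j)‖ ^ 2 +
      (σ2 / P) * ∑ j, ∑ m, ‖W m j‖ ^ 2)

section Matrix

variable {ι κ : Type*} [Fintype ι] [Fintype κ]

theorem Matrix.re_trace_conjTranspose_mul_self (W : Matrix ι κ ℂ) :
    ((Wᴴ * W).trace).re = ∑ j, ∑ m, ‖W m j‖ ^ 2 := by
  simp only [Matrix.trace, Matrix.diag, Matrix.mul_apply, Matrix.conjTranspose_apply,
    Complex.re_sum, RCLike.star_def, Complex.conj_mul', ← Complex.ofReal_pow, Complex.ofReal_re]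

theorem Matrix.sum_sq_norm_pos_of_ne_zero {W : Matrix ι κ ℂ} (hW : W ≠ 0) :
    0 < ∑ j, ∑ m, ‖W m j‖ ^ 2 := by
  obtain ⟨m, j, hmj⟩ : ∃ m j, W m j ≠ 0 := by
    by_contra! h
    exact hW (Matrix.ext h)
  calc (0 : ℝ) < ‖W m j‖ ^ 2 := by positivity
    _ ≤ ∑ m', ‖W m' j‖ ^ 2 :=
        single_le_sum (f := fun m' => ‖W m' j‖ ^ 2) (fun _ _ => by positivity) (mem_univ m)
    _ ≤ ∑ j', ∑ m', ‖W m' j'‖ ^ 2 :=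
        single_le_sum (f := fun j' => ∑ m', ‖W m' j'‖ ^ 2)
          (fun _ _ => sum_nonneg fun _ _ => by positivity) (mem_univ j)

theorem Matrix.sum_sq_norm_ofReal_smul (c : ℝ) (W : Matrix ι κ ℂ) :
    ∑ j, ∑ m, ‖((c : ℂ) • W) m j‖ ^ 2 = c ^ 2 * ∑ j, ∑ m, ‖W m j‖ ^ 2 := by
  simp only [Matrix.smul_apply, smul_eq_mul, norm_mul, Complex.norm_real, Real.norm_eq_abs,
    mul_pow, sq_abs, mul_sum]

end Matrix

theorem sum_mul_log_one_add_le {ι : Type*} [Fintype ι] {lam x y : ι → ℝ}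
    (hlam : ∀ k, 0 ≤ lam k) (hx : ∀ k, 0 ≤ x k) (hxy : ∀ k, x k ≤ y k) :
    ∑ k, lam k * Real.log (1 + x k) ≤ ∑ k, lam k * Real.log (1 + y k) :=
  sum_le_sum fun k _ => mul_le_mul_of_nonneg_left
    (Real.log_le_log (by linarith [hx k]) (by linarith [hxy k])) (hlam k)

section SINR

variable {M K : ℕ} (g : Fin K → Fin M → ℂ)

theorem norm_dotc_ofReal_smul_sq (c : ℝ) (W : Matrix (Fin M) (Fin K) ℂ) (j : Fin K)
    (v : Fin M → ℂ) :
    ‖dotc v (fun m => ((c : ℂ) • W) m j)‖ ^ 2 = c ^ 2 * ‖dotc v (fun m => W m j)‖ ^ 2 := by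
  have : dotc v (fun m => ((c : ℂ) • W) m j) = c * dotc v (fun m => W m j) := by
    simp only [dotc, Matrix.smul_apply, smul_eq_mul, mul_sum]
    exact sum_congr rfl fun _ _ => by ring
  rw [this, norm_mul, Complex.norm_real, Real.norm_eq_abs, mul_pow, sq_abs]

theorem SINRbar_ofReal_smul (σ2 P : ℝ) {c : ℝ} (hc : c ≠ 0) (W : Matrix (Fin M) (Fin K) ℂ)
    (k : Fin K) : SINRbar g σ2 P ((c : ℂ) • W) k = SINRbar g σ2 P W k := by
  simp only [SINRbar, norm_dotc_ofReal_smul_sq, Matrix.sum_sq_norm_ofReal_smul, ← mul_sum]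
  rw [mul_left_comm (σ2 / P), ← mul_add, mul_div_mul_left _ _ (pow_ne_zero 2 hc)]

theorem SINRbar_eq_SINR {σ2 P : ℝ} (hP : P ≠ 0) {W : Matrix (Fin M) (Fin K) ℂ}
    (hW : ∑ j, ∑ m, ‖W m j‖ ^ 2 = P) (k : Fin K) :
    SINRbar g σ2 P W k = SINR g σ2 W k := by
  rw [SINRbar, SINR, hW, div_mul_cancel₀ _ hP]

theorem SINR_nonneg {σ2 : ℝ} (hσ : 0 ≤ σ2) (W : Matrix (Fin M) (Fin K) ℂ) (k : Fin K) :
    0 ≤ SINR g σ2 W k := by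
  unfold SINR
  positivity

theorem SINR_le_SINRbar {σ2 P : ℝ} (hσ : 0 < σ2) (hP : 0 < P) {W : Matrix (Fin M) (Fin K) ℂ}
    (hW : ∑ j, ∑ m, ‖W m j‖ ^ 2 ≤ P) (k : Fin K) :
    SINR g σ2 W k ≤ SINRbar g σ2 P W k := by
  rcases eq_or_ne W 0 with rfl | hW0
  · simp [SINR, SINRbar, dotc]
  have hnoise : σ2 / P * ∑ j, ∑ m, ‖W m j‖ ^ 2 ≤ σ2 := by
    rw [div_mul_eq_mul_div, div_le_iff₀ hP]
    exact mul_le_mul_of_nonneg_left hW hσ.le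
  have := Matrix.sum_sq_norm_pos_of_ne_zero hW0
  unfold SINR SINRbar
  gcongr

end SINR

theorem stmt2 {M K : ℕ} (g : Fin K → Fin M → ℂ) (σ2 : ℝ) (hσ : 0 < σ2)
    (P : ℝ) (hP : 0 < P) (lam : Fin K → ℝ) (hlam : ∀ k, 0 ≤ lam k)
    (Wbar : Matrix (Fin M) (Fin K) ℂ) (hWbar : Wbar ≠ 0)
    (hmax : ∀ W : Matrix (Fin M) (Fin K) ℂ,
      ∑ k, lam k * Real.log (1 + SINRbar g σ2 P W k) ≤
        ∑ k, lam k * Real.log (1 + SINRbar g σ2 P Wbar k)) :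
    ((((Real.sqrt (P / ((Wbarᴴ * Wbar).trace).re) : ℂ) • Wbar)ᴴ *
        ((Real.sqrt (P / ((Wbarᴴ * Wbar).trace).re) : ℂ) • Wbar)).trace).re = P ∧
    ∀ W : Matrix (Fin M) (Fin K) ℂ, ((Wᴴ * W).trace).re ≤ P →
      ∑ k, lam k * Real.log (1 + SINR g σ2 W k) ≤
        ∑ k, lam k * Real.log (1 + SINR g σ2
          ((Real.sqrt (P / ((Wbarᴴ * Wbar).trace).re) : ℂ) • Wbar) k) := by
  simp only [Matrix.re_trace_conjTranspose_mul_self] at *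
  have hpos := Matrix.sum_sq_norm_pos_of_ne_zero hWbar
  set c := Real.sqrt (P / ∑ j, ∑ m, ‖Wbar m j‖ ^ 2)
  have hc : c ≠ 0 := (Real.sqrt_pos.mpr (div_pos hP hpos)).ne'
  have hpower : ∑ j, ∑ m, ‖((c : ℂ) • Wbar) m j‖ ^ 2 = P := by
    rw [Matrix.sum_sq_norm_ofReal_smul, Real.sq_sqrt (div_pos hP hpos).le,
      div_mul_cancel₀ _ hpos.ne']
  refine ⟨hpower, fun W hW => ?_⟩
  calc ∑ k, lam k * Real.log (1 + SINR g σ2 W k)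
      ≤ ∑ k, lam k * Real.log (1 + SINRbar g σ2 P W k) :=
        sum_mul_log_one_add_le hlam (SINR_nonneg g hσ.le W) (SINR_le_SINRbar g hσ hP hW)
    _ ≤ ∑ k, lam k * Real.log (1 + SINRbar g σ2 P Wbar k) := hmax W
    _ = ∑ k, lam k * Real.log (1 + SINR g σ2 ((c : ℂ) • Wbar) k) := by
        simp only [← SINRbar_ofReal_smul g σ2 P hc Wbar, SINRbar_eq_SINR g hP.ne' hpower]
end

section
/- For real numbers A ≥ 0 and B > A, the function f(ω) = log(1+ω) − ω + (1+ω)A/B on [0,∞) is uniquely maximized at ω⋆ = A/(B−A), with maximum value log(B/(B−A)) = log(1 + A/(B−A)). -/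
theorem stmt5 (A B : ℝ) (hA : 0 ≤ A) (hAB : A < B) :
    (Real.log (1 + A / (B - A)) - A / (B - A) + (1 + A / (B - A)) * A / B =
      Real.log (B / (B - A)) ∧ Real.log (B / (B - A)) = Real.log (1 + A / (B - A))) ∧
    ∀ ω : ℝ, 0 ≤ ω → ω ≠ A / (B - A) →
      Real.log (1 + ω) - ω + (1 + ω) * A / B <
        Real.log (1 + A / (B - A)) - A / (B - A) + (1 + A / (B - A)) * A / B := by
  have hBA : 0 < B - A := by linarith
  have hB : 0 < B := by linarith
  set γ : ℝ := A / (B - A) with hγdef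
  have hγ : 0 ≤ γ := div_nonneg hA hBA.le
  have hsum : 1 + γ = B / (B - A) := by
    field_simp [hγdef]
    rw [hγdef, add_mul, div_mul_cancel₀ _ hBA.ne']; ring
  have hAB' : (1 + γ) * A / B = γ := by
    rw [hsum]; field_simp [hγdef]
    rw [hγdef, mul_div_assoc', mul_div_cancel_left₀ _ hBA.ne']
  constructor
  · constructor
    · rw [hAB', hsum]; ring
    · rw [hsum]
  · intro ω hω hne
    have h1ω : 0 < 1 + ω := by linarith
    have h1γ : 0 < 1 + γ := by linarith
    have hx : 0 < (1 + ω) / (1 + γ) := div_pos h1ω h1γ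
    have hx1 : (1 + ω) / (1 + γ) ≠ 1 := by
      intro h
      apply hne
      field_simp at h
      linarith
    have key := Real.log_lt_sub_one_of_pos hx hx1
    rw [Real.log_div h1ω.ne' h1γ.ne'] at key
    have hrw : (1 + ω) / (1 + γ) - 1 = (ω - γ) / (1 + γ) := by
      field_simp
      ring
    rw [hrw] at key
    have hfrac : (ω - γ) / (1 + γ) = (ω - γ) * (B - A) / B := by
      rw [hsum]
      field_simp
    rw [hfrac] at key
    have hABexp : (1 + ω) * A / B - ((1 + γ) * A / B) = (ω - γ) * A / B := by
      field_simp; ring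
    have hsplit : (ω - γ) * (B - A) / B + (ω - γ) * A / B = ω - γ := by
      field_simp; ring
    nlinarith [key, hABexp, hsplit]
end

section
/- Lagrangian dual transform for weighted sum-of-log-ratios: for fixed nonnegative signal powers A_k and denominators B_k with 0 ≤ A_k < B_k and weights λ_k ≥ 0, max over ω ∈ [0,∞)^K of ∑_k λ_k (log(1+ω_k) − ω_k + (1+ω_k)A_k/B_k) equals ∑_k λ_k log(1 + A_k/(B_k − A_k)), attained at ω_k⋆ = A_k/(B_k − A_k). -/
/-!
The sum decouples over `k`. With `y = 1 + a / (b - a) = b / (b - a)` one has `1 - a / b = 1 / y`,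
so each summand is `log (1 + ω) - (1 + ω) / y + 1`, and `log t ≤ t - 1` at `t = (1 + ω) / y`
bounds it by `log y`, with equality at `ω = y - 1`.
-/

open Real

lemma log_sub_div_le_log_sub_one {x y : ℝ} (hx : 0 < x) (hy : 0 < y) :
    log x - x / y ≤ log y - 1 := by
  have h := log_le_sub_one_of_pos (div_pos hx hy)
  rw [log_div hx.ne' hy.ne'] at h
  linarith

lemma one_add_div_sub_eq_div_sub {a b : ℝ} (hab : a ≠ b) : 1 + a / (b - a) = b / (b - a) := by
  have : b - a ≠ 0 := sub_ne_zero.mpr hab.symm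
  field_simp
  ring

lemma div_sub_eq_one_add_div_sub_mul_div {a b : ℝ} (hb : b ≠ 0) (hab : a ≠ b) :
    a / (b - a) = (1 + a / (b - a)) * a / b := by
  rw [one_add_div_sub_eq_div_sub hab]
  field_simp

lemma log_one_add_sub_add_mul_div_le {a b ω : ℝ} (ha : 0 ≤ a) (hab : a < b) (hω : -1 < ω) :
    log (1 + ω) - ω + (1 + ω) * a / b ≤ log (1 + a / (b - a)) := by
  have hb : 0 < b := ha.trans_lt hab
  have hba : 0 < b - a := sub_pos.mpr hab
  have hobj : log (1 + ω) - ω + (1 + ω) * a / b =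
      log (1 + ω) - (1 + ω) / (b / (b - a)) + 1 := by
    field_simp
    ring
  rw [hobj, one_add_div_sub_eq_div_sub hab.ne]
  linarith [log_sub_div_le_log_sub_one (by linarith : 0 < 1 + ω) (div_pos hb hba)]

theorem stmt17 {K : ℕ} (A B : Fin K → ℝ) (hA : ∀ k, 0 ≤ A k) (hAB : ∀ k, A k < B k)
    (lam : Fin K → ℝ) (hlam : ∀ k, 0 ≤ lam k) :
    (∀ ω : Fin K → ℝ, (∀ k, 0 ≤ ω k) →
      ∑ k, lam k * (Real.log (1 + ω k) - ω k + (1 + ω k) * A k / B k) ≤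
        ∑ k, lam k * Real.log (1 + A k / (B k - A k))) ∧
    (∑ k, lam k * (Real.log (1 + A k / (B k - A k)) - A k / (B k - A k) +
        (1 + A k / (B k - A k)) * A k / B k) =
      ∑ k, lam k * Real.log (1 + A k / (B k - A k))) := by
  refine ⟨fun ω hω => ?_, ?_⟩
  · refine Finset.sum_le_sum fun k _ => mul_le_mul_of_nonneg_left ?_ (hlam k)
    exact log_one_add_sub_add_mul_div_le (hA k) (hAB k) (by linarith [hω k])
  · refine Finset.sum_congr rfl fun k _ => ?_
    have hB : B k ≠ 0 := ((hA k).trans_lt (hAB k)).ne'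
    rw [← div_sub_eq_one_add_div_sub_mul_div hB (hAB k).ne, sub_add_cancel]
end
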